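/- For any vector V ∈ ℝ^N, the condition ∑_{i=1}^N (D_p)_i w_i V_i = 0 (i.e. D_p^T W V = 0) holds if and only if the interpolation polynomial v(τ) = ∑_{i=1}^N V_i L_i(τ) has degree at most N−2. -/

import Mathlib

open Polynomial

/-- `lagL τ i` is the `i`-th Lagrange basis polynomial (of degree `N - 1`)
for the nodes `τ 0, …, τ (N-1)`, satisfying `(lagL τ i).eval (τ j) = δᵢⱼ`. -/
noncomputable def lagL {N : ℕ} (τ : Fin N → ℝ) (i : Fin N) : ℝ[X] :=
  Lagrange.basis Finset.univ τ i

/-- `lagLp τ` is the polynomial `L_p(x) = ∏ᵢ (x - τᵢ)`. -/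
noncomputable def lagLp {N : ℕ} (τ : Fin N → ℝ) : ℝ[X] :=
  ∏ i, (X - C (τ i))

/-- The differentiation matrix `D`, with `D i j = L_j'(τ i)`. -/
noncomputable def matD {N : ℕ} (τ : Fin N → ℝ) : Matrix (Fin N) (Fin N) ℝ :=
  fun i j => (derivative (lagL τ j)).eval (τ i)

/-- The vector `D_p`, with `(D_p) i = L_p'(τ i)`. -/
noncomputable def vecDp {N : ℕ} (τ : Fin N → ℝ) : Fin N → ℝ :=
  fun i => (derivative (lagLp τ)).eval (τ i)

/-- Columns `2, …, N+1` (in 1-based numbering) of the augmented differentiation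
matrix `D̃ = [D  D_p]`: column `j` (0-based, `j < N - 1`) is column `j + 1` of `D`,
and the last column is `D_p`. -/
noncomputable def matDtil2 {N : ℕ} (τ : Fin N → ℝ) : Matrix (Fin N) (Fin N) ℝ :=
  fun i j => if h : (j : ℕ) + 1 < N then matD τ i ⟨(j : ℕ) + 1, h⟩ else vecDp τ i

/-- The quadrature rule with nodes `τ` and weights `w` integrates exactly all
polynomials of degree at most `2 * N - 3` over `[-1, 1]`. -/
def IsQuadrature {N : ℕ} (τ : Fin N → ℝ) (w : Fin N → ℝ) : Prop :=
  ∀ p : ℝ[X], p.natDegree ≤ 2 * N - 3 →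
    ∑ i, w i * p.eval (τ i) = ∫ t in (-1 : ℝ)..1, p.eval t

/-- The integration matrix `A` with rows indexed (0-based) by `i : Fin (N-1)`
corresponding to the node `τ (i+1)`: `A i j = ∫_{-1}^{τ (i+1)} L_j(t) dt`. -/
noncomputable def matA {N : ℕ} (τ : Fin N → ℝ) : Matrix (Fin (N - 1)) (Fin N) ℝ :=
  fun i j => ∫ t in (-1 : ℝ)..(τ ⟨(i : ℕ) + 1, by have := i.isLt; omega⟩), (lagL τ j).eval t

/-- The row vector `A_p`, with `(A_p) j = (1/N) ∏_{k ≠ j} 1 / (τ j - τ k)`. -/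
noncomputable def rowAp {N : ℕ} (τ : Fin N → ℝ) : Fin N → ℝ :=
  fun j => (1 / (N : ℝ)) * ∏ k ∈ Finset.univ.erase j, (τ j - τ k)⁻¹

/-- The matrix `Ã` obtained by stacking `A` on top of the row vector `A_p`. -/
noncomputable def matAtil {N : ℕ} (τ : Fin N → ℝ) : Matrix (Fin N) (Fin N) ℝ :=
  fun i j => if h : (i : ℕ) + 1 < N then matA τ ⟨(i : ℕ), by omega⟩ j else rowAp τ j

/-- The adjoint integration matrix `A† = W⁻¹ Aᵀ W_{2:N}`, with columns indexed
(0-based) by `j : Fin (N-1)` corresponding to the node `τ (j+1)`. -/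
noncomputable def matAdag {N : ℕ} (τ : Fin N → ℝ) (w : Fin N → ℝ) :
    Matrix (Fin N) (Fin (N - 1)) ℝ :=
  fun i j => (w i)⁻¹ * matA τ j i * w ⟨(j : ℕ) + 1, by have := j.isLt; omega⟩

/-- `polyM τ k` is the Lagrange basis polynomial (of degree `N - 3`) for the
interior nodes `τ 1, …, τ (N-2)`, satisfying `(polyM τ k).eval (τ m) = δₖₘ`
for interior indices `m`. -/
noncomputable def polyM {N : ℕ} (τ : Fin N → ℝ) (k : Fin N) : ℝ[X] :=
  Lagrange.basis (Finset.univ.filter fun m : Fin N => 0 < (m : ℕ) ∧ (m : ℕ) < N - 1) τ k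

/-- The polynomial `λ(x) = ∑ᵢ (A† r)ᵢ Lᵢ(x)`. -/
noncomputable def lamP {N : ℕ} (τ : Fin N → ℝ) (w : Fin N → ℝ) (r : Fin (N - 1) → ℝ) : ℝ[X] :=
  ∑ i, C ((matAdag τ w).mulVec r i) * lagL τ i

/-! The functional `v ↦ ∑ᵢ L_p'(τᵢ) wᵢ v(τᵢ)` vanishes on polynomials `u` of degree `≤ N - 2`:
the quadrature is exact for `L_p' u` and for `L_p u'`, and since `L_p` vanishes at every node,
in particular at `±1`, integration by parts gives
`∫ L_p' u = -∫ L_p u' = -∑ᵢ wᵢ L_p(τᵢ) u'(τᵢ) = 0`.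
As `L_p'` has leading coefficient `N`, an interpolant `v` of degree `≤ N - 1` with top
coefficient `a` differs from `(a / N) L_p'` by such a `u`, so the sum in question equals
`(a / N) ∑ᵢ wᵢ L_p'(τᵢ)²`. The last sum is positive (positive weights, distinct nodes), hence the
sum vanishes iff `a = 0`. -/

open Finset

theorem Polynomial.natDegree_le_iff_coeff_succ_eq_zero {R : Type*} [Semiring R] {p : R[X]}
    {n : ℕ} (hp : p.natDegree ≤ n + 1) : p.natDegree ≤ n ↔ p.coeff (n + 1) = 0 :=
  ⟨fun h => coeff_eq_zero_of_natDegree_lt (by omega), natDegree_le_pred hp⟩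

theorem Polynomial.integral_eval_derivative_mul_eq_neg (p u : ℝ[X]) {a b : ℝ} (ha : p.eval a = 0)
    (hb : p.eval b = 0) :
    ∫ t in a..b, (derivative p * u).eval t = -∫ t in a..b, (p * derivative u).eval t := by
  have hparts := intervalIntegral.integral_deriv_mul_eq_sub
    (fun x _ => p.hasDerivAt x) (fun x _ => u.hasDerivAt x)
    ((derivative p).continuous.intervalIntegrable a b)
    ((derivative u).continuous.intervalIntegrable a b)
  simp only [eval_mul]
  rw [eq_neg_iff_add_eq_zero, ← intervalIntegral.integral_add
    (Continuous.intervalIntegrable (by fun_prop) a b)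
    (Continuous.intervalIntegrable (by fun_prop) a b), hparts, ha, hb]
  simp

section Nodes

variable {N : ℕ} {τ : Fin N → ℝ}

theorem lagLp_eq_nodal : lagLp τ = Lagrange.nodal univ τ := rfl

theorem natDegree_lagLp : (lagLp τ).natDegree = N := by
  simp [lagLp_eq_nodal, Lagrange.natDegree_nodal]

theorem eval_lagLp_node (i : Fin N) : (lagLp τ).eval (τ i) = 0 :=
  Lagrange.eval_nodal_at_node (mem_univ i)

theorem vecDp_eq_prod (i : Fin N) : vecDp τ i = ∏ j ∈ univ.erase i, (τ i - τ j) := by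
  rw [vecDp, lagLp_eq_nodal, Lagrange.eval_nodal_derivative_eval_node_eq (mem_univ i),
    Lagrange.eval_nodal]

theorem vecDp_ne_zero (hτ : Function.Injective τ) (i : Fin N) : vecDp τ i ≠ 0 := by
  rw [vecDp_eq_prod]
  exact prod_ne_zero_iff.2 fun j hj => sub_ne_zero.2 fun h => (mem_erase.1 hj).1 (hτ h).symm

theorem natDegree_derivative_lagLp_le : (derivative (lagLp τ)).natDegree ≤ N - 1 :=
  (natDegree_derivative_le _).trans_eq (by rw [natDegree_lagLp])

theorem coeff_derivative_lagLp (hN : 0 < N) : (derivative (lagLp τ)).coeff (N - 1) = N := by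
  have hmonic : (lagLp τ).Monic := Lagrange.nodal_monic
  have hlead := hmonic.coeff_natDegree
  rw [natDegree_lagLp] at hlead
  rw [coeff_derivative, Nat.sub_add_cancel hN, hlead]
  push_cast [Nat.cast_sub hN]
  ring

theorem natDegree_sum_C_mul_lagL_le (hτ : Function.Injective τ) (V : Fin N → ℝ) :
    (∑ i, C (V i) * lagL τ i).natDegree ≤ N - 1 := by
  refine natDegree_sum_le_of_forall_le _ _ fun i _ => (natDegree_C_mul_le _ _).trans ?_
  rw [lagL, Lagrange.natDegree_basis hτ.injOn (mem_univ i), card_univ, Fintype.card_fin]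

theorem eval_sum_C_mul_lagL_node (hτ : Function.Injective τ) (V : Fin N → ℝ) (j : Fin N) :
    (∑ i, C (V i) * lagL τ i).eval (τ j) = V j := by
  have := Lagrange.eval_interpolate_at_node V hτ.injOn (mem_univ j)
  rwa [Lagrange.interpolate_apply] at this

variable {w : Fin N → ℝ}

theorem IsQuadrature.sum_vecDp_mul_mul_eval_eq_zero (hquad : IsQuadrature τ w) (hN : 3 ≤ N)
    {i₀ i₁ : Fin N} (h₀ : τ i₀ = -1) (h₁ : τ i₁ = 1) {u : ℝ[X]} (hu : u.natDegree ≤ N - 2) :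
    ∑ i, vecDp τ i * w i * u.eval (τ i) = 0 := by
  have hdeg_left : (derivative (lagLp τ) * u).natDegree ≤ 2 * N - 3 :=
    natDegree_mul_le.trans (by have := natDegree_derivative_lagLp_le (τ := τ); omega)
  have hdeg_right : (lagLp τ * derivative u).natDegree ≤ 2 * N - 3 :=
    natDegree_mul_le.trans (by
      have := natDegree_derivative_le u
      rw [natDegree_lagLp]
      omega)
  calc ∑ i, vecDp τ i * w i * u.eval (τ i)
      = ∑ i, w i * (derivative (lagLp τ) * u).eval (τ i) :=
        sum_congr rfl fun i _ => by rw [vecDp, eval_mul]; ring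
    _ = ∫ t in (-1 : ℝ)..1, (derivative (lagLp τ) * u).eval t := hquad _ hdeg_left
    _ = -∫ t in (-1 : ℝ)..1, (lagLp τ * derivative u).eval t := by
        rw [← h₀, ← h₁]
        exact integral_eval_derivative_mul_eq_neg _ _ (eval_lagLp_node i₀) (eval_lagLp_node i₁)
    _ = -∑ i, w i * (lagLp τ * derivative u).eval (τ i) := by rw [hquad _ hdeg_right]
    _ = 0 := by simp [eval_lagLp_node]

theorem IsQuadrature.sum_vecDp_mul_mul_eval_eq (hquad : IsQuadrature τ w) (hN : 3 ≤ N)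
    {i₀ i₁ : Fin N} (h₀ : τ i₀ = -1) (h₁ : τ i₁ = 1) {v : ℝ[X]} (hv : v.natDegree ≤ N - 1) :
    ∑ i, vecDp τ i * w i * v.eval (τ i) = v.coeff (N - 1) / N * ∑ i, w i * vecDp τ i ^ 2 := by
  set c := v.coeff (N - 1) / N
  have hNR : (N : ℝ) ≠ 0 := by positivity
  set u := v - C c * derivative (lagLp τ)
  have hu : u.natDegree ≤ N - 2 := by
    have hsucc : N - 2 + 1 = N - 1 := by omega
    have hu₁ : u.natDegree ≤ N - 2 + 1 := hsucc ▸ (natDegree_sub_le _ _).trans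
      (max_le hv ((natDegree_C_mul_le _ _).trans natDegree_derivative_lagLp_le))
    rw [natDegree_le_iff_coeff_succ_eq_zero hu₁, hsucc, coeff_sub, coeff_C_mul,
      coeff_derivative_lagLp (by omega)]
    simp only [c, div_mul_cancel₀ _ hNR, sub_self]
  have horth := hquad.sum_vecDp_mul_mul_eval_eq_zero hN h₀ h₁ hu
  have hvu : v = u + C c * derivative (lagLp τ) := (sub_add_cancel _ _).symm
  rw [hvu]
  simp only [eval_add, eval_mul, eval_C, mul_add, sum_add_distrib, horth, zero_add, mul_sum]
  exact sum_congr rfl fun i _ => by rw [vecDp]; ring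

end Nodes

/-- `D_pᵀ W V = 0` iff the interpolant `∑ᵢ Vᵢ Lᵢ` has degree at most `N - 2`. -/
theorem stmt2 (N : ℕ) (hN : 3 ≤ N) (τ : Fin N → ℝ) (hmono : StrictMono τ)
    (h0 : τ ⟨0, by omega⟩ = -1) (h1 : τ ⟨N - 1, by omega⟩ = 1) (w : Fin N → ℝ) (hw : ∀ i, 0 < w i) (hquad : IsQuadrature τ w) :
    ∀ V : Fin N → ℝ,
      (∑ i, vecDp τ i * w i * V i = 0) ↔
        (∑ i, C (V i) * lagL τ i).natDegree ≤ N - 2 := by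
  intro V
  have hτ : Function.Injective τ := hmono.injective
  set v := ∑ i, C (V i) * lagL τ i
  have hv : v.natDegree ≤ N - 1 := natDegree_sum_C_mul_lagL_le hτ V
  have hS : 0 < ∑ i, w i * vecDp τ i ^ 2 :=
    sum_pos (fun i _ => mul_pos (hw i) (sq_pos_of_ne_zero (vecDp_ne_zero hτ i)))
      ⟨⟨0, by omega⟩, mem_univ _⟩
  have hsum : ∑ i, vecDp τ i * w i * V i = v.coeff (N - 1) / N * ∑ i, w i * vecDp τ i ^ 2 := by
    rw [← hquad.sum_vecDp_mul_mul_eval_eq hN h0 h1 hv]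
    exact sum_congr rfl fun i _ => by rw [eval_sum_C_mul_lagL_node hτ V i]
  have hsucc : N - 2 + 1 = N - 1 := by omega
  rw [hsum, mul_eq_zero, or_iff_left hS.ne', div_eq_zero_iff, or_iff_left (by positivity),
    natDegree_le_iff_coeff_succ_eq_zero (hsucc ▸ hv), hsucc]
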